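/- For every data exchange setting S, every positive query Q (a union of conjunctive queries) over the target schema, and every source instance I, the supported certain answers to Q over I w.r.t. S equal the classical certain answers to Q over I w.r.t. S. -/

import Mathlib

namespace DE

abbrev Var := ℕ

inductive Term (C : Type) where
  | const : C → Term C
  | null : ℕ → Term C

structure Atom (R C : Type) where
  rel : R
  args : List (Var ⊕ C)

structure Fact (R C : Type) where
  rel : R
  args : List (Term C)

abbrev Instance (R C : Type) := Set (Fact R C)

def termOf {C : Type} (h : Var → Term C) : Var ⊕ C → Term C
  | Sum.inl v => h v
  | Sum.inr c => Term.const c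

def applyAtom {R C : Type} (h : Var → Term C) (a : Atom R C) : Fact R C :=
  ⟨a.rel, a.args.map (termOf h)⟩

/-- `h` maps every atom of `as` into the instance `I`. -/
def holdsBody {R C : Type} (I : Instance R C) (h : Var → Term C)
    (as : List (Atom R C)) : Prop :=
  ∀ a ∈ as, applyAtom h a ∈ I

/-- A tuple-generating dependency. -/
structure TGD (R C : Type) where
  body : List (Atom R C)
  head : List (Atom R C)
  frontier : List Var
  exvars : List Var

def varsOf {R C : Type} (as : List (Atom R C)) : Set Var :=
  {v | ∃ a ∈ as, (Sum.inl v : Var ⊕ C) ∈ a.args}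

/-- Well-formedness of a TGD: frontier variables occur in the body, existential
variables do not, and every head variable is a frontier or existential variable. -/
def TGD.wf {R C : Type} (ρ : TGD R C) : Prop :=
  (∀ v ∈ ρ.frontier, v ∈ varsOf ρ.body) ∧
  (∀ z ∈ ρ.exvars, z ∉ varsOf ρ.body) ∧
  (∀ v ∈ varsOf ρ.head, v ∈ ρ.frontier ∨ v ∈ ρ.exvars)

/-- Satisfaction of a TGD by an instance. -/
def satTGD {R C : Type} (I : Instance R C) (ρ : TGD R C) : Prop :=
  ∀ h : Var → Term C, holdsBody I h ρ.body →
    ∃ h' : Var → Term C, (∀ v ∈ varsOf ρ.body, h' v = h v) ∧ holdsBody I h' ρ.head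

/-- An equality-generating dependency. -/
structure EGD (R C : Type) where
  body : List (Atom R C)
  lhs : Var
  rhs : Var

def satEGD {R C : Type} (I : Instance R C) (η : EGD R C) : Prop :=
  ∀ h : Var → Term C, holdsBody I h η.body → h η.lhs = h η.rhs

/-- An ex-choice: given a TGD and a tuple of constants for its frontier,
a constant for each existential variable. -/
abbrev ExChoice (R C : Type) := TGD R C → List C → Var → C

def constHom {C : Type} (h : Var → C) : Var → Term C := fun v => Term.const (h v)

/-- `I` satisfies all ground versions of the TGD `ρ` that are coherent with `γ`. -/
def satTGDcoh {R C : Type} (I : Instance R C) (γ : ExChoice R C) (ρ : TGD R C) : Prop :=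
  ∀ h : Var → C, (∀ z ∈ ρ.exvars, h z = γ ρ (ρ.frontier.map h) z) →
    holdsBody I (constHom h) ρ.body → holdsBody I (constHom h) ρ.head

/-- A data exchange setting: source-to-target TGDs, target TGDs, target EGDs. -/
structure Setting (R C : Type) where
  sigmaST : List (TGD R C)
  sigmaT : List (TGD R C)
  sigmaE : List (EGD R C)

def Setting.wf {R C : Type} (S : Setting R C) : Prop :=
  ∀ ρ ∈ S.sigmaST ++ S.sigmaT, ρ.wf

/-- Classical solution: `I ∪ J` satisfies `Σst` and `J` satisfies `Σt`. -/
def classicalSolution {R C : Type} (S : Setting R C) (I J : Instance R C) : Prop :=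
  J.Finite ∧ (∀ ρ ∈ S.sigmaST, satTGD (I ∪ J) ρ) ∧
    (∀ ρ ∈ S.sigmaT, satTGD J ρ) ∧ (∀ η ∈ S.sigmaE, satEGD J η)

def supportedWith {R C : Type} (S : Setting R C) (γ : ExChoice R C)
    (I J : Instance R C) : Prop :=
  (∀ ρ ∈ S.sigmaST, satTGDcoh (I ∪ J) γ ρ) ∧
    (∀ ρ ∈ S.sigmaT, satTGDcoh J γ ρ) ∧ (∀ η ∈ S.sigmaE, satEGD J η)

/-- Supported solution: for some ex-choice `γ`, `I ∪ J` satisfies `Σst^γ`,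
`J` satisfies `Σt^γ`, and no proper subset of `J` does. -/
def supportedSolution {R C : Type} (S : Setting R C) (I J : Instance R C) : Prop :=
  J.Finite ∧ ∃ γ : ExChoice R C, supportedWith S γ I J ∧
    ∀ J' : Instance R C, J' ⊂ J → ¬ supportedWith S γ I J'

/-- An instance without labeled nulls (a database). -/
def nullFree {R C : Type} (I : Instance R C) : Prop :=
  ∀ f ∈ I, ∀ t ∈ f.args, ∃ c : C, t = Term.const c

end DE

namespace DE

/-- A conjunctive query with body atoms and a tuple of free variables. -/
structure CQ (R C : Type) where
  body : List (Atom R C)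
  free : List Var

def CQ.safe {R C : Type} (q : CQ R C) : Prop := ∀ v ∈ q.free, v ∈ varsOf q.body

def evalCQ {R C : Type} (q : CQ R C) (J : Instance R C) : Set (List (Term C)) :=
  {t | ∃ h : Var → Term C, holdsBody J h q.body ∧ t = q.free.map h}

/-- Output of a union of conjunctive queries (positive query). -/
def evalUCQ {R C : Type} (Q : List (CQ R C)) (J : Instance R C) : Set (List (Term C)) :=
  {t | ∃ q ∈ Q, t ∈ evalCQ q J}

/-- Classical certain answers. -/
def cert {R C : Type} (S : Setting R C) (I : Instance R C) (Q : List (CQ R C)) :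
    Set (List (Term C)) :=
  {t | ∀ J, classicalSolution S I J → t ∈ evalUCQ Q J}

/-- Supported certain answers. -/
def scert {R C : Type} (S : Setting R C) (I : Instance R C) (Q : List (CQ R C)) :
    Set (List (Term C)) :=
  {t | ∀ J, supportedSolution S I J → t ∈ evalUCQ Q J}

end DE


/-!
Supported solutions are subset-minimal, and the ground TGD instances coherent with an ex-choice
only ever produce null-free facts; so a supported solution is null-free. On null-free instances
the coherent ground instances of a well-formed TGD already imply the TGD, hence every supported
solution is classical and `cert ⊆ scert`.

Conversely, let `J` be a classical solution. Rename its nulls injectively into constants that occur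
nowhere in `I`, `J`, the dependency bodies, the query or the candidate answer `t`. Undoing this
renaming maps every body match in the renamed instance back to one in `J`, so the renamed
instance is again a classical solution, now null-free. On a null-free classical solution the
existential witnesses define an ex-choice, and minimising yields a supported solution inside it.
An answer `t` there is an answer in the renamed `J` by monotonicity, and undoing the renaming,
which fixes the constants of the query and of `t`, turns it into an answer in `J`.
-/

namespace DE

variable {R C : Type}

lemma applyAtom_congr {h h' : Var → Term C} {a : Atom R C}
    (hc : ∀ v, (Sum.inl v : Var ⊕ C) ∈ a.args → h v = h' v) :
    applyAtom h a = applyAtom h' a := by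
  unfold applyAtom
  congr 1
  apply List.map_congr_left
  rintro (v | c) hm
  · exact hc v hm
  · rfl

lemma holdsBody_congr {K : Instance R C} {h h' : Var → Term C} {as : List (Atom R C)}
    (hc : ∀ v ∈ varsOf as, h v = h' v) (hb : holdsBody K h as) : holdsBody K h' as :=
  fun a ha => applyAtom_congr (fun v hv => hc v ⟨a, ha, hv⟩) ▸ hb a ha

lemma holdsBody_mono {K K' : Instance R C} (hsub : K ⊆ K') {h : Var → Term C}
    {as : List (Atom R C)} (hb : holdsBody K h as) : holdsBody K' h as :=
  fun a ha => hsub (hb a ha)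

lemma evalUCQ_mono (Q : List (CQ R C)) {J J' : Instance R C} (hsub : J ⊆ J') :
    evalUCQ Q J ⊆ evalUCQ Q J' := by
  rintro t ⟨q, hq, h, hb, rfl⟩
  exact ⟨q, hq, h, holdsBody_mono hsub hb, rfl⟩

lemma mem_args_applyAtom (h : Var → Term C) {a : Atom R C} {v : Var}
    (hm : (Sum.inl v : Var ⊕ C) ∈ a.args) : h v ∈ (applyAtom h a).args :=
  List.mem_map_of_mem hm

def Fact.IsGround (f : Fact R C) : Prop := ∀ u ∈ f.args, ∃ c, u = Term.const c

lemma isGround_applyAtom_constHom (h : Var → C) (a : Atom R C) :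
    (applyAtom (constHom h) a).IsGround := by
  intro u hu
  obtain ⟨x | c, -, rfl⟩ := List.mem_map.mp hu
  exacts [⟨h x, rfl⟩, ⟨c, rfl⟩]

lemma nullFree_union {I J : Instance R C} (hI : nullFree I) (hJ : nullFree J) :
    nullFree (I ∪ J) := by
  rintro f (hf | hf)
  exacts [hI f hf, hJ f hf]

noncomputable def Term.constOf [Nonempty C] : Term C → C
  | .const c => c
  | .null _ => Classical.arbitrary C

lemma const_constOf_of_mem_varsOf [Nonempty C] {M : Instance R C} (hM : nullFree M)
    {h : Var → Term C} {as : List (Atom R C)} (hb : holdsBody M h as) {v : Var}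
    (hv : v ∈ varsOf as) : Term.const (h v).constOf = h v := by
  obtain ⟨a, ha, hm⟩ := hv
  obtain ⟨c, hc⟩ := hM _ (hb a ha) _ (mem_args_applyAtom h hm)
  rw [hc]
  rfl

section SupportedToClassical

variable {S : Setting R C} {I J : Instance R C}

lemma satTGD_of_satTGDcoh [Nonempty C] {M : Instance R C} (hM : nullFree M)
    {γ : ExChoice R C} {ρ : TGD R C} (hwf : ρ.wf) (hcoh : satTGDcoh M γ ρ) : satTGD M ρ := by
  classical
  intro h hbody
  obtain ⟨hfr, hex, -⟩ := hwf
  let e : Var → C := fun v => (h v).constOf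
  let h₀ : Var → C := fun v => if v ∈ ρ.exvars then γ ρ (ρ.frontier.map e) v else e v
  have h₀_body : ∀ v ∈ varsOf ρ.body, constHom h₀ v = h v := by
    intro v hv
    simp only [constHom, h₀, e, if_neg fun hz => hex v hz hv]
    exact const_constOf_of_mem_varsOf hM hbody hv
  have h₀_frontier : ρ.frontier.map h₀ = ρ.frontier.map e :=
    List.map_congr_left fun v hv => if_neg fun hz => hex v hz (hfr v hv)
  refine ⟨constHom h₀, h₀_body, hcoh h₀ (fun z hz => ?_) ?_⟩
  · rw [h₀_frontier]
    exact if_pos hz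
  · exact holdsBody_congr (fun v hv => (h₀_body v hv).symm) hbody

lemma supportedWith_of_subset {γ : ExChoice R C} {J' : Instance R C} (hsub : J' ⊆ J)
    (hground : ∀ f ∈ J, f.IsGround → f ∈ J') (hJ : supportedWith S γ I J) :
    supportedWith S γ I J' := by
  obtain ⟨hST, hT, hE⟩ := hJ
  refine ⟨fun ρ hρ h hcoh hbody a ha => ?_, fun ρ hρ h hcoh hbody a ha => ?_,
    fun η hη h hbody => hE η hη h (holdsBody_mono hsub hbody)⟩
  · have hbody' := holdsBody_mono (Set.union_subset_union_right I hsub) hbody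
    rcases hST ρ hρ h hcoh hbody' a ha with hI | hJ
    · exact Or.inl hI
    · exact Or.inr (hground _ hJ (isGround_applyAtom_constHom h a))
  · exact hground _ (hT ρ hρ h hcoh (holdsBody_mono hsub hbody) a ha)
      (isGround_applyAtom_constHom h a)

lemma nullFree_of_supportedSolution (hJ : supportedSolution S I J) : nullFree J := by
  obtain ⟨-, γ, hsup, hmin⟩ := hJ
  by_contra hnf
  refine hmin {f ∈ J | f.IsGround}
    ⟨Set.sep_subset _ _, fun hsub => hnf fun f hf => (hsub hf).2⟩
    (supportedWith_of_subset (Set.sep_subset _ _) (fun f hf hg => ⟨hf, hg⟩) hsup)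

lemma classicalSolution_of_supportedSolution [Nonempty C] (hS : S.wf) (hI : nullFree I)
    (hJ : supportedSolution S I J) : classicalSolution S I J := by
  have hJnf := nullFree_of_supportedSolution hJ
  obtain ⟨hfin, γ, ⟨hST, hT, hE⟩, -⟩ := hJ
  refine ⟨hfin, fun ρ hρ => ?_, fun ρ hρ => ?_, hE⟩
  · exact satTGD_of_satTGDcoh (nullFree_union hI hJnf) (hS ρ (List.mem_append_left _ hρ))
      (hST ρ hρ)
  · exact satTGD_of_satTGDcoh hJnf (hS ρ (List.mem_append_right _ hρ)) (hT ρ hρ)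

lemma cert_subset_scert [Nonempty C] (hS : S.wf) (hI : nullFree I) (Q : List (CQ R C)) :
    cert S I Q ⊆ scert S I Q :=
  fun _ ht J hJ => ht J (classicalSolution_of_supportedSolution hS hI hJ)

end SupportedToClassical

section ClassicalToSupported

variable {S : Setting R C} {I K : Instance R C}

def IsHeadWitness (M : Instance R C) (ρ : TGD R C) (cs : List C) (w : Var → C) : Prop :=
  ∀ h : Var → C, ρ.frontier.map h = cs → (∀ z ∈ ρ.exvars, h z = w z) →
    holdsBody M (constHom h) ρ.head

lemma exists_isHeadWitness [Nonempty C] {M : Instance R C} (hM : nullFree M) {ρ : TGD R C}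
    (hwf : ρ.wf) (hsat : satTGD M ρ) {h₀ : Var → C}
    (hb : holdsBody M (constHom h₀) ρ.body) :
    ∃ w, IsHeadWitness M ρ (ρ.frontier.map h₀) w := by
  obtain ⟨h', hagree, hhead⟩ := hsat _ hb
  refine ⟨fun v => (h' v).constOf, fun h hfr hex => holdsBody_congr (fun v hv => ?_) hhead⟩
  rcases hwf.2.2 v hv with hvf | hvz
  · rw [hagree v (hwf.1 v hvf), constHom, constHom, List.map_inj_left.mp hfr v hvf]
  · rw [← const_constOf_of_mem_varsOf hM hhead hv, constHom, hex v hvz]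

lemma exists_exChoice_supportedWith [Nonempty C] (hS : S.wf) (hI : nullFree I)
    (hK : nullFree K) (hcl : classicalSolution S I K) : ∃ γ, supportedWith S γ I K := by
  classical
  obtain ⟨-, hST, hT, hE⟩ := hcl
  -- A witness into `K` also serves `I ∪ K`, so it is preferred whenever one exists.
  let γ : ExChoice R C := fun ρ cs =>
    if ∃ w, IsHeadWitness K ρ cs w then Classical.epsilon (IsHeadWitness K ρ cs)
    else Classical.epsilon (IsHeadWitness (I ∪ K) ρ cs)
  have hγK : ∀ ρ cs, (∃ w, IsHeadWitness K ρ cs w) → IsHeadWitness K ρ cs (γ ρ cs) := by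
    intro ρ cs hw
    simp only [γ, if_pos hw]
    exact Classical.epsilon_spec hw
  have hγIK : ∀ ρ cs, (∃ w, IsHeadWitness (I ∪ K) ρ cs w) →
      IsHeadWitness (I ∪ K) ρ cs (γ ρ cs) := by
    intro ρ cs hw
    by_cases hwK : ∃ w, IsHeadWitness K ρ cs w
    · exact fun h hfr hex => holdsBody_mono Set.subset_union_right (hγK ρ cs hwK h hfr hex)
    · simp only [γ, if_neg hwK]
      exact Classical.epsilon_spec hw
  refine ⟨γ, fun ρ hρ h hcoh hbody => ?_, fun ρ hρ h hcoh hbody => ?_, hE⟩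
  · exact hγIK ρ _ (exists_isHeadWitness (nullFree_union hI hK)
      (hS ρ (List.mem_append_left _ hρ)) (hST ρ hρ) hbody) h rfl hcoh
  · exact hγK ρ _ (exists_isHeadWitness hK (hS ρ (List.mem_append_right _ hρ)) (hT ρ hρ)
      hbody) h rfl hcoh

lemma exists_supportedSolution_subset {γ : ExChoice R C} (hK : K.Finite)
    (hsup : supportedWith S γ I K) : ∃ K' ⊆ K, supportedSolution S I K' := by
  obtain ⟨L, hL⟩ := (hK.finite_subsets.subset fun L (hL : L ⊆ K ∧ _) => hL.1).exists_minimal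
    ⟨K, subset_rfl, hsup⟩
  exact ⟨L, hL.prop.1, hK.subset hL.prop.1, γ, hL.prop.2,
    fun L' hL' hsupL' => hL.not_prop_of_lt hL' ⟨hL'.subset.trans hL.prop.1, hsupL'⟩⟩

end ClassicalToSupported

def tupleConsts (t : List (Term C)) : Set C := {c | Term.const c ∈ t}

def instConsts (K : Instance R C) : Set C := ⋃ f ∈ K, tupleConsts f.args

def atomConsts (as : List (Atom R C)) : Set C :=
  {c | ∃ a ∈ as, (Sum.inr c : Var ⊕ C) ∈ a.args}

def Setting.bodyConsts (S : Setting R C) : Set C :=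
  (⋃ ρ ∈ S.sigmaST ++ S.sigmaT, atomConsts ρ.body) ∪ ⋃ η ∈ S.sigmaE, atomConsts η.body

def queryConsts (Q : List (CQ R C)) : Set C := ⋃ q ∈ Q, atomConsts q.body

lemma tupleConsts_finite (t : List (Term C)) : (tupleConsts t).Finite :=
  t.finite_toSet.preimage fun _ _ _ _ h => Term.const.inj h

lemma instConsts_finite {K : Instance R C} (hK : K.Finite) : (instConsts K).Finite :=
  hK.biUnion fun f _ => tupleConsts_finite f.args

lemma atomConsts_finite (as : List (Atom R C)) : (atomConsts as).Finite := by
  have h : atomConsts as = ⋃ a ∈ {x | x ∈ as}, Sum.inr ⁻¹' {x | x ∈ a.args} := by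
    ext c
    simp [atomConsts]
  rw [h]
  exact as.finite_toSet.biUnion fun a _ =>
    a.args.finite_toSet.preimage fun _ _ _ _ h => Sum.inr_injective h

lemma Setting.bodyConsts_finite (S : Setting R C) : S.bodyConsts.Finite :=
  ((S.sigmaST ++ S.sigmaT).finite_toSet.biUnion fun _ _ => atomConsts_finite _).union
    (S.sigmaE.finite_toSet.biUnion fun _ _ => atomConsts_finite _)

lemma queryConsts_finite (Q : List (CQ R C)) : (queryConsts Q).Finite :=
  Q.finite_toSet.biUnion fun _ _ => atomConsts_finite _

lemma exists_injective_disjoint_range [Infinite C] {F : Set C} (hF : F.Finite) :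
    ∃ φ : ℕ → C, φ.Injective ∧ Disjoint F (Set.range φ) := by
  let e := hF.infinite_compl.natEmbedding
  refine ⟨fun n => e n, fun m n h => e.injective (Subtype.ext h), ?_⟩
  rw [Set.disjoint_right]
  rintro _ ⟨n, rfl⟩
  exact (e n).2

section Renaming

def Fact.map (σ : Term C → Term C) (f : Fact R C) : Fact R C := ⟨f.rel, f.args.map σ⟩

lemma Fact.map_map (σ τ : Term C → Term C) (f : Fact R C) :
    (f.map τ).map σ = f.map (σ ∘ τ) := by
  simp [Fact.map]

lemma Fact.map_eq_self {σ : Term C → Term C} {f : Fact R C} (h : ∀ u ∈ f.args, σ u = u) :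
    f.map σ = f := by
  cases f
  simp only [Fact.map, Fact.mk.injEq, true_and]
  exact List.map_congr_left h |>.trans (List.map_id _)

lemma applyAtom_comp (σ : Term C → Term C) (h : Var → Term C) {a : Atom R C}
    (hσ : ∀ c, (Sum.inr c : Var ⊕ C) ∈ a.args → σ (.const c) = .const c) :
    applyAtom (σ ∘ h) a = (applyAtom h a).map σ := by
  simp only [applyAtom, Fact.map, List.map_map, Fact.mk.injEq, true_and]
  apply List.map_congr_left
  rintro (v | c) hm
  · rfl
  · exact (hσ c hm).symm

variable (φ : ℕ → C)

def ren : Term C → Term C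
  | .const c => .const c
  | .null n => .const (φ n)

open Classical in
/-- Inverse of `ren φ` on terms whose constants avoid the range of `φ`. -/
noncomputable def unren : Term C → Term C
  | .const c => if h : c ∈ Set.range φ then .null h.choose else .const c
  | .null n => .null n

def mapInst (K : Instance R C) : Instance R C := Fact.map (ren φ) '' K

lemma exists_ren_eq_const (u : Term C) : ∃ c, ren φ u = .const c := by
  cases u
  exacts [⟨_, rfl⟩, ⟨_, rfl⟩]

lemma nullFree_mapInst (K : Instance R C) : nullFree (mapInst φ K) := by
  rintro _ ⟨f, -, rfl⟩ u hu
  obtain ⟨w, -, rfl⟩ := List.mem_map.mp hu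
  exact exists_ren_eq_const φ w

lemma mapInst_union_of_nullFree {I : Instance R C} (hI : nullFree I) (J : Instance R C) :
    mapInst φ (I ∪ J) = I ∪ mapInst φ J := by
  have hfix : Fact.map (ren φ) '' I = I := by
    conv_rhs => rw [← Set.image_id I]
    refine Set.image_congr fun f hf => Fact.map_eq_self fun u hu => ?_
    obtain ⟨c, rfl⟩ := hI f hf u hu
    rfl
  rw [mapInst, Set.image_union, hfix, mapInst]

variable {φ}

lemma unren_const_of_notMem {c : C} (hc : c ∉ Set.range φ) : unren φ (.const c) = .const c :=
  dif_neg hc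

variable {K : Instance R C}

lemma unren_ren_of_mem (hφ : φ.Injective) (hK : Disjoint (instConsts K) (Set.range φ))
    {f : Fact R C} (hf : f ∈ K) {u : Term C} (hu : u ∈ f.args) : unren φ (ren φ u) = u := by
  cases u with
  | const c => exact unren_const_of_notMem (hK.notMem_of_mem_left (Set.mem_biUnion hf hu))
  | null n =>
    have hn : φ n ∈ Set.range φ := ⟨n, rfl⟩
    simp only [ren, unren, dif_pos hn]
    exact congrArg Term.null (hφ hn.choose_spec)

lemma ren_unren_of_mem_varsOf (hφ : φ.Injective) (hK : Disjoint (instConsts K) (Set.range φ))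
    {h : Var → Term C} {as : List (Atom R C)} (hb : holdsBody (mapInst φ K) h as) {v : Var}
    (hv : v ∈ varsOf as) : ren φ (unren φ (h v)) = h v := by
  obtain ⟨a, ha, hm⟩ := hv
  obtain ⟨f, hf, hfa⟩ := hb a ha
  have hmem : h v ∈ (f.map (ren φ)).args := hfa ▸ mem_args_applyAtom h hm
  obtain ⟨u, hu, hru⟩ := List.mem_map.mp hmem
  rw [← hru, unren_ren_of_mem hφ hK hf hu]

lemma holdsBody_mapInst {h : Var → Term C} {as : List (Atom R C)} (hb : holdsBody K h as) :
    holdsBody (mapInst φ K) (ren φ ∘ h) as :=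
  fun a ha => ⟨_, hb a ha, (applyAtom_comp _ _ fun _ _ => rfl).symm⟩

lemma holdsBody_unren (hφ : φ.Injective) (hK : Disjoint (instConsts K) (Set.range φ))
    {as : List (Atom R C)} (has : Disjoint (atomConsts as) (Set.range φ)) {h : Var → Term C}
    (hb : holdsBody (mapInst φ K) h as) : holdsBody K (unren φ ∘ h) as := by
  intro a ha
  obtain ⟨f, hf, hfa⟩ := hb a ha
  have hunren : (f.map (ren φ)).map (unren φ) = f := by
    rw [Fact.map_map]
    exact Fact.map_eq_self fun u hu => unren_ren_of_mem hφ hK hf hu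
  rw [applyAtom_comp _ _ fun c hc => unren_const_of_notMem (has.notMem_of_mem_left ⟨a, ha, hc⟩),
    ← hfa, hunren]
  exact hf

lemma satTGD_mapInst (hφ : φ.Injective) (hK : Disjoint (instConsts K) (Set.range φ))
    {ρ : TGD R C} (hρ : Disjoint (atomConsts ρ.body) (Set.range φ)) (hsat : satTGD K ρ) :
    satTGD (mapInst φ K) ρ := by
  intro h hb
  obtain ⟨g, hg, hhead⟩ := hsat _ (holdsBody_unren hφ hK hρ hb)
  refine ⟨ren φ ∘ g, fun v hv => ?_, holdsBody_mapInst hhead⟩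
  rw [Function.comp_apply, hg v hv]
  exact ren_unren_of_mem_varsOf hφ hK hb hv

lemma mem_varsOf_of_satEGD {η : EGD R C} (hsat : satEGD K η) {g : Var → Term C}
    (hb : holdsBody K g η.body) (hne : η.lhs ≠ η.rhs) :
    η.lhs ∈ varsOf η.body ∧ η.rhs ∈ varsOf η.body := by
  -- Otherwise that side of the equation could be set to anything, e.g. to two distinct nulls.
  have hfree : ∀ v ∉ varsOf η.body, ∀ x,
      Function.update g v x η.lhs = Function.update g v x η.rhs :=
    fun v hv x => hsat _ (holdsBody_congr
      (fun w hw => (Function.update_of_ne (ne_of_mem_of_not_mem hw hv) _ _).symm) hb)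
  constructor <;> by_contra hnot
  · have h0 := hfree _ hnot (.null 0)
    have h1 := hfree _ hnot (.null 1)
    simp only [Function.update_self, Function.update_of_ne hne.symm] at h0 h1
    exact absurd (h0.trans h1.symm) (by simp)
  · have h0 := hfree _ hnot (.null 0)
    have h1 := hfree _ hnot (.null 1)
    simp only [Function.update_self, Function.update_of_ne hne] at h0 h1
    exact absurd (h0.symm.trans h1) (by simp)

lemma satEGD_mapInst (hφ : φ.Injective) (hK : Disjoint (instConsts K) (Set.range φ))
    {η : EGD R C} (hη : Disjoint (atomConsts η.body) (Set.range φ)) (hsat : satEGD K η) :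
    satEGD (mapInst φ K) η := by
  intro h hb
  by_cases hne : η.lhs = η.rhs
  · rw [hne]
  have hb' := holdsBody_unren hφ hK hη hb
  obtain ⟨hl, hr⟩ := mem_varsOf_of_satEGD hsat hb' hne
  rw [← ren_unren_of_mem_varsOf hφ hK hb hl, ← ren_unren_of_mem_varsOf hφ hK hb hr]
  exact congrArg (ren φ) (hsat _ hb')

lemma classicalSolution_mapInst (hφ : φ.Injective) {S : Setting R C} {I : Instance R C}
    (hI : nullFree I)
    (hIφ : Disjoint (instConsts I) (Set.range φ)) (hKφ : Disjoint (instConsts K) (Set.range φ))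
    (hSφ : Disjoint S.bodyConsts (Set.range φ)) (hK : classicalSolution S I K) :
    classicalSolution S I (mapInst φ K) := by
  obtain ⟨hfin, hST, hT, hE⟩ := hK
  have hIKφ : Disjoint (instConsts (I ∪ K)) (Set.range φ) := by
    rw [instConsts, Set.biUnion_union]
    exact Set.disjoint_union_left.mpr ⟨hIφ, hKφ⟩
  have hbody : ∀ ρ ∈ S.sigmaST ++ S.sigmaT, Disjoint (atomConsts ρ.body) (Set.range φ) :=
    fun ρ hρ => hSφ.mono_left (Set.subset_union_of_subset_left
      (Set.subset_iUnion₂ (s := fun ρ (_ : ρ ∈ _) => atomConsts ρ.body) ρ hρ) _)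
  refine ⟨hfin.image _, fun ρ hρ => ?_, fun ρ hρ => ?_, fun η hη => ?_⟩
  · rw [← mapInst_union_of_nullFree φ hI]
    exact satTGD_mapInst hφ hIKφ (hbody ρ (List.mem_append_left _ hρ)) (hST ρ hρ)
  · exact satTGD_mapInst hφ hKφ (hbody ρ (List.mem_append_right _ hρ)) (hT ρ hρ)
  · exact satEGD_mapInst hφ hKφ
      (hSφ.mono_left (Set.subset_union_of_subset_right
        (Set.subset_iUnion₂ (s := fun η (_ : η ∈ _) => atomConsts η.body) η hη) _))
      (hE η hη)

lemma mem_evalUCQ_of_mem_evalUCQ_mapInst (hφ : φ.Injective) {Q : List (CQ R C)}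
    (hQ : ∀ q ∈ Q, q.safe)
    (hQφ : Disjoint (queryConsts Q) (Set.range φ)) (hKφ : Disjoint (instConsts K) (Set.range φ))
    {t : List (Term C)} (htφ : Disjoint (tupleConsts t) (Set.range φ))
    (ht : t ∈ evalUCQ Q (mapInst φ K)) : t ∈ evalUCQ Q K := by
  obtain ⟨q, hq, h, hb, rfl⟩ := ht
  refine ⟨q, hq, unren φ ∘ h,
    holdsBody_unren hφ hKφ
      (hQφ.mono_left (Set.subset_iUnion₂ (s := fun q (_ : q ∈ Q) => atomConsts q.body) q hq))
      hb,
    List.map_congr_left fun v hv => ?_⟩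
  obtain ⟨c, hc⟩ := exists_ren_eq_const φ (unren φ (h v))
  rw [ren_unren_of_mem_varsOf hφ hKφ hb (hQ q hq v hv)] at hc
  have hct : c ∉ Set.range φ := htφ.notMem_of_mem_left (show Term.const c ∈ q.free.map h from
    hc ▸ List.mem_map_of_mem hv)
  rw [Function.comp_apply, hc, unren_const_of_notMem hct]

end Renaming

end DE

/-- for positive queries, supported certain answers coincide with
classical certain answers. -/
theorem scert_eq_cert_for_positive {R C : Type} [Infinite C]
    (S : DE.Setting R C) (hS : S.wf)
    (Q : List (DE.CQ R C)) (hQ : ∀ q ∈ Q, q.safe)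
    (I : DE.Instance R C) (hInf : DE.nullFree I) (hIfin : I.Finite) :
    DE.scert S I Q = DE.cert S I Q := by
  refine Set.Subset.antisymm (fun t ht J hJ => ?_) (DE.cert_subset_scert hS hInf Q)
  obtain ⟨φ, hφ, hfresh⟩ := DE.exists_injective_disjoint_range
    (((DE.instConsts_finite hIfin).union (DE.instConsts_finite hJ.1)).union
      ((DE.tupleConsts_finite t).union (S.bodyConsts_finite.union (DE.queryConsts_finite Q))))
  simp only [Set.disjoint_union_left] at hfresh
  obtain ⟨⟨hIφ, hJφ⟩, htφ, hSφ, hQφ⟩ := hfresh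
  have hJren := DE.classicalSolution_mapInst hφ hInf hIφ hJφ hSφ hJ
  obtain ⟨γ, hγ⟩ := DE.exists_exChoice_supportedWith hS hInf (DE.nullFree_mapInst φ J) hJren
  obtain ⟨J', hJ'sub, hJ'⟩ := DE.exists_supportedSolution_subset hJren.1 hγ
  exact DE.mem_evalUCQ_of_mem_evalUCQ_mapInst hφ hQ hQφ hJφ htφ
    (DE.evalUCQ_mono Q hJ'sub (ht J' hJ'))
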